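/- arXiv:1111.5828 — 4 statements merged into one kernel-verified Lean document; each statement's English description precedes it below -/
import Mathlib

section
/- Let G be a locally compact group and μ a non-degenerate probability measure on G (meaning: for every non-zero non-negative continuous function f vanishing at infinity, there exists n ∈ ℕ with ∫ f dμⁿ ≠ 0, where μⁿ is the n-fold convolution). If h : G → ℝ is a continuous bounded μ-harmonic function (h(s) = ∫ h(st) dμ(t) for all s) that attains its supremum norm at some point of G, and ‖h‖ = h(s₀) = 1 for some s₀, then h is constant equal to 1. -/
/-!
Put `g x = 1 - h (s₀ x)`. Then `g ≥ 0`, `g` is again `μ`-harmonic and `g 1 = 0`, so by Fubini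
`∫ g dμⁿ = g 1 = 0` for every `n`. If `g` were positive somewhere, a compactly supported Urysohn
bump times `g` would be a non-zero non-negative `C₀` function below `g`, and its `μⁿ`-integrals
would all vanish, against non-degeneracy. Hence `g ≡ 0`, i.e. `h ≡ 1`.
-/

open MeasureTheory

noncomputable def measConv {G : Type*} [Group G] [MeasurableSpace G]
    (μ ν : Measure G) : Measure G :=
  (μ.prod ν).map (fun p : G × G => p.1 * p.2)

/-- `measConvPow μ n` is the convolution power `μ^{n+1}`, so that `measConvPow μ 0 = μ`. -/
noncomputable def measConvPow {G : Type*} [Group G] [MeasurableSpace G]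
    (μ : Measure G) : ℕ → Measure G
  | 0 => μ
  | n + 1 => measConv (measConvPow μ n) μ

section Harmonic

variable {G : Type*} [Group G] [MeasurableSpace G]

def IsHarmonic (μ : Measure G) (h : G → ℝ) : Prop :=
  ∀ s, h s = ∫ t, h (s * t) ∂μ

instance isFiniteMeasure_measConv (ν μ : Measure G) [IsFiniteMeasure ν] [IsFiniteMeasure μ] :
    IsFiniteMeasure (measConv ν μ) := by
  unfold measConv
  infer_instance

instance isFiniteMeasure_measConvPow (μ : Measure G) [IsFiniteMeasure μ] (n : ℕ) :
    IsFiniteMeasure (measConvPow μ n) := by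
  induction n with
  | zero => exact ‹_›
  | succ n ih => exact isFiniteMeasure_measConv _ _

variable {μ : Measure G} {h : G → ℝ}

theorem IsHarmonic.comp_mul_left (hh : IsHarmonic μ h) (a : G) :
    IsHarmonic μ (fun x => h (a * x)) := fun s => by
  simpa only [mul_assoc] using hh (a * s)

theorem IsHarmonic.const_sub [IsProbabilityMeasure μ] (hh : IsHarmonic μ h)
    (hint : ∀ s, Integrable (fun t => h (s * t)) μ) (c : ℝ) :
    IsHarmonic μ (fun x => c - h x) := fun s => by
  rw [integral_sub (integrable_const c) (hint s), integral_const, ← hh s]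
  simp

/-- Fubini: the `μ`-harmonicity of `g` integrates out the second factor of `ν ∗ μ`. -/
theorem integral_measConv_of_isHarmonic (ν : Measure G) [IsFiniteMeasure ν] [IsFiniteMeasure μ]
    {g : G → ℝ} (hharm : IsHarmonic μ g) (hmeas : Measurable g) {C : ℝ} (hbdd : ∀ x, |g x| ≤ C)
    (hmul : AEMeasurable (fun p : G × G => p.1 * p.2) (ν.prod μ)) :
    ∫ x, g x ∂(measConv ν μ) = ∫ x, g x ∂ν := by
  have hint : Integrable (fun p : G × G => g (p.1 * p.2)) (ν.prod μ) :=
    .of_bound (hmeas.comp_aemeasurable hmul).aestronglyMeasurable C (.of_forall fun p => hbdd _)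
  rw [measConv, integral_map hmul hmeas.aestronglyMeasurable, integral_prod _ hint]
  exact integral_congr_ae (.of_forall fun x => (hharm x).symm)

/-- Where multiplication fails to be measurable, `ν ∗ μ = 0` by the junk value of `Measure.map`. -/
theorem integral_measConvPow_eq_zero_of_isHarmonic [IsFiniteMeasure μ] {g : G → ℝ}
    (hharm : IsHarmonic μ g) (hmeas : Measurable g) {C : ℝ} (hbdd : ∀ x, |g x| ≤ C)
    (hg_one : g 1 = 0) (n : ℕ) : ∫ x, g x ∂(measConvPow μ n) = 0 := by
  induction n with
  | zero => simpa [measConvPow, hg_one] using (hharm 1).symm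
  | succ n ih =>
    by_cases hmul : AEMeasurable (fun p : G × G => p.1 * p.2) ((measConvPow μ n).prod μ)
    · rw [measConvPow, integral_measConv_of_isHarmonic _ hharm hmeas hbdd hmul, ih]
    · rw [measConvPow, measConv, Measure.map_of_not_aemeasurable hmul, integral_zero_measure]

end Harmonic

section Bump

variable {X : Type*} [TopologicalSpace X] [RegularSpace X] [LocallyCompactSpace X]

theorem exists_zeroAtInfty_nonneg_le_ne_zero {g : X → ℝ} (hg : Continuous g) (hg_nonneg : 0 ≤ g)
    {x₀ : X} (hx₀ : g x₀ ≠ 0) :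
    ∃ F : ZeroAtInftyContinuousMap X ℝ, (∀ x, 0 ≤ F x) ∧ (∀ x, F x ≤ g x) ∧ F ≠ 0 := by
  obtain ⟨f, hf_one, -, hf_supp, hf_mem⟩ := exists_continuous_one_zero_of_isCompact
    isCompact_singleton isClosed_empty (Set.disjoint_empty {x₀})
  let F : ZeroAtInftyContinuousMap X ℝ :=
    ⟨⟨fun x => f x * g x, f.continuous.mul hg⟩, (hf_supp.mul_right).is_zero_at_infty⟩
  refine ⟨F, fun x => mul_nonneg (hf_mem x).1 (hg_nonneg x),
    fun x => mul_le_of_le_one_left (hg_nonneg x) (hf_mem x).2, fun hF => hx₀ ?_⟩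
  simpa [F, hf_one rfl] using DFunLike.congr_fun hF x₀

theorem eq_zero_of_integral_eq_zero_of_nondegenerate [MeasurableSpace X] (ν : ℕ → Measure X)
    (hnondeg : ∀ f : ZeroAtInftyContinuousMap X ℝ, (∀ x, 0 ≤ f x) → f ≠ 0 →
      ∃ n : ℕ, ∫ x, f x ∂(ν n) ≠ 0)
    {g : X → ℝ} (hg : Continuous g) (hg_nonneg : 0 ≤ g) (hint : ∀ n, Integrable g (ν n))
    (hzero : ∀ n, ∫ x, g x ∂(ν n) = 0) : g = 0 := by
  by_contra hne
  obtain ⟨x₀, hx₀⟩ := Function.ne_iff.mp hne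
  obtain ⟨F, hF_nonneg, hF_le, hF_ne⟩ := exists_zeroAtInfty_nonneg_le_ne_zero hg hg_nonneg hx₀
  obtain ⟨n, hn⟩ := hnondeg F hF_nonneg hF_ne
  have hle : ∫ x, F x ∂(ν n) ≤ ∫ x, g x ∂(ν n) :=
    integral_mono_of_nonneg (.of_forall hF_nonneg) (hint n) (.of_forall hF_le)
  exact hn (le_antisymm (hle.trans (hzero n).le) (integral_nonneg hF_nonneg))

end Bump

/-- Let `G` be a locally compact group and `μ` a non-degenerate probability measure on `G`
(for every non-zero non-negative `f ∈ C₀(G)` some convolution power `μⁿ` integrates `f`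
to a non-zero value).  If `h : G → ℝ` is a continuous bounded `μ`-harmonic function with
`‖h‖ = 1` attained at some point `s₀` (i.e. `h(s₀) = 1 = sup |h|`), then `h ≡ 1`. -/
theorem harmonic_attaining_norm_is_constant
    {G : Type*} [Group G] [TopologicalSpace G] [IsTopologicalGroup G]
    [LocallyCompactSpace G] [MeasurableSpace G] [BorelSpace G]
    (μ : Measure G) [IsProbabilityMeasure μ]
    (hnondeg : ∀ f : ZeroAtInftyContinuousMap G ℝ, (∀ x, 0 ≤ f x) → f ≠ 0 →
      ∃ n : ℕ, ∫ x, f x ∂(measConvPow μ n) ≠ 0)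
    (h : G → ℝ) (hcont : Continuous h)
    (hbdd : ∀ s : G, |h s| ≤ 1)
    (hharm : ∀ s : G, h s = ∫ t, h (s * t) ∂μ)
    (s₀ : G) (hs₀ : h s₀ = 1) :
    ∀ s : G, h s = 1 := by
  have hh_int : ∀ (ν : Measure G) [IsFiniteMeasure ν] (a : G), Integrable (fun t => h (a * t)) ν :=
    fun ν _ a => .of_bound (by fun_prop : Continuous fun t => h (a * t)).aestronglyMeasurable 1
      (.of_forall fun t => hbdd _)
  set g : G → ℝ := fun x => 1 - h (s₀ * x)
  have hg_cont : Continuous g := by fun_prop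
  have hg_nonneg : 0 ≤ g := fun x => sub_nonneg.mpr (abs_le.mp (hbdd _)).2
  have hg_bdd : ∀ x, |g x| ≤ 2 := fun x => by
    obtain ⟨hlo, hhi⟩ := abs_le.mp (hbdd (s₀ * x))
    exact abs_le.mpr ⟨by linarith, by linarith⟩
  have hh_harm : IsHarmonic μ h := hharm
  have hg_harm : IsHarmonic μ g := (hh_harm.comp_mul_left s₀).const_sub
    (fun s => by simpa only [mul_assoc] using hh_int μ (s₀ * s)) 1
  have hg_zero : g = 0 :=
    eq_zero_of_integral_eq_zero_of_nondegenerate _ hnondeg hg_cont hg_nonneg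
      (fun n => (integrable_const 1).sub (hh_int _ s₀))
      (integral_measConvPow_eq_zero_of_isHarmonic hg_harm hg_cont.measurable hg_bdd
        (by simp [g, hs₀]))
  intro s
  have := congrFun hg_zero (s₀⁻¹ * s)
  simp only [g, mul_inv_cancel_left, Pi.zero_apply, sub_eq_zero] at this
  exact this.symm
end

section
/- Let A be a unital C*-algebra with a coassociative comultiplication, and let μ be a state on A. If ω is a weak* cluster point of the sequence of Cesàro averages (1/n) Σ_{k=1}^{n} μᵏ of the convolution powers of μ, then ω ⋆ μ = μ ⋆ ω = ω and ω ⋆ ω = ω; that is, ω is an idempotent state absorbing μ. -/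
open scoped ComplexOrder
open Filter NormedSpace

set_option maxHeartbeats 1000000 in
/-- Every weak* cluster point of the Cesàro averages of the convolution powers of a state `μ`
on a unital C*-algebra (the convolution `⋆` on the dual being induced by a coassociative
comultiplication: it is an associative, bilinear, contractive multiplication which is
separately weak*-continuous on bounded sets) is an idempotent state absorbing `μ`:
`ω ⋆ μ = μ ⋆ ω = ω` and `ω ⋆ ω = ω`. -/
theorem cesaro_cluster_point_idempotent
    {E : Type*} [CStarAlgebra E] [PartialOrder E] [StarOrderedRing E]
    (mul : StrongDual ℂ E → StrongDual ℂ E → StrongDual ℂ E)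
    -- bilinearity
    (h_add_l : ∀ f g k, mul (f + g) k = mul f k + mul g k)
    (h_add_r : ∀ f g k, mul k (f + g) = mul k f + mul k g)
    (h_smul_l : ∀ (c : ℂ) f k, mul (c • f) k = c • mul f k)
    (h_smul_r : ∀ (c : ℂ) f k, mul k (c • f) = c • mul k f)
    -- associativity
    (h_assoc : ∀ f g k, mul (mul f g) k = mul f (mul g k))
    -- contractivity
    (h_contr : ∀ f g, ‖mul f g‖ ≤ ‖f‖ * ‖g‖)
    -- separate weak*-continuity on bounded sets
    (h_cont_l : ∀ (ν : StrongDual ℂ E) (r : ℝ), ContinuousOn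
      (fun f : WeakDual ℂ E => StrongDual.toWeakDual (mul (WeakDual.toStrongDual f) ν))
      {f : WeakDual ℂ E | ‖WeakDual.toStrongDual f‖ ≤ r})
    (h_cont_r : ∀ (ν : StrongDual ℂ E) (r : ℝ), ContinuousOn
      (fun f : WeakDual ℂ E => StrongDual.toWeakDual (mul ν (WeakDual.toStrongDual f)))
      {f : WeakDual ℂ E | ‖WeakDual.toStrongDual f‖ ≤ r})
    -- μ is a state
    (μ : StrongDual ℂ E) (hμ_norm : ‖μ‖ = 1) (hμ_one : μ 1 = 1)
    (hμ_pos : ∀ x : E, 0 ≤ x → 0 ≤ μ x)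
    -- the convolution powers μᵏ, k ≥ 1
    (pw : ℕ → StrongDual ℂ E) (hpw1 : pw 1 = μ) (hpw : ∀ n, pw (n + 1) = mul (pw n) μ)
    -- ω is a weak* cluster point of the Cesàro averages (1/n) ∑_{k=1}^n μᵏ
    (ω : StrongDual ℂ E)
    (hω : MapClusterPt (StrongDual.toWeakDual ω) atTop
      (fun n : ℕ => StrongDual.toWeakDual ((n : ℂ)⁻¹ • ∑ k ∈ Finset.Icc 1 n, pw k))) :
    mul μ ω = ω ∧ mul ω μ = ω ∧ mul ω ω = ω := by
  classical
  set S : ℕ → StrongDual ℂ E := fun n => (n : ℂ)⁻¹ • ∑ k ∈ Finset.Icc 1 n, pw k with hSdef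
  -- norms of convolution powers
  have hpw_norm : ∀ n : ℕ, ‖pw (n + 1)‖ ≤ 1 := by
    intro n
    induction n with
    | zero => rw [hpw1, hμ_norm]
    | succ m ih =>
      rw [hpw (m + 1)]
      calc ‖mul (pw (m + 1)) μ‖ ≤ ‖pw (m + 1)‖ * ‖μ‖ := h_contr _ _
        _ ≤ 1 * 1 := by rw [hμ_norm]; exact mul_le_mul_of_nonneg_right ih (by norm_num)
        _ = 1 := one_mul 1
  -- norms of Cesàro averages
  have hS_norm : ∀ n : ℕ, ‖S n‖ ≤ 1 := by
    intro n
    match n with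
    | 0 => simp [hSdef]
    | (m + 1) =>
      have hsum : ‖∑ k ∈ Finset.Icc 1 (m + 1), pw k‖ ≤ ((m + 1 : ℕ) : ℝ) := by
        calc ‖∑ k ∈ Finset.Icc 1 (m + 1), pw k‖ ≤ ∑ k ∈ Finset.Icc 1 (m + 1), ‖pw k‖ :=
              norm_sum_le _ _
          _ ≤ ∑ _k ∈ Finset.Icc 1 (m + 1), (1 : ℝ) := by
              refine Finset.sum_le_sum fun k hk => ?_
              obtain ⟨hk1, _⟩ := Finset.mem_Icc.mp hk
              obtain ⟨j, rfl⟩ : ∃ j, k = j + 1 := ⟨k - 1, by omega⟩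
              exact hpw_norm j
          _ = ((m + 1 : ℕ) : ℝ) := by simp
      have hpos : (0 : ℝ) < ((m + 1 : ℕ) : ℝ) := by positivity
      calc ‖S (m + 1)‖ = ‖(((m + 1 : ℕ) : ℂ))⁻¹‖ * ‖∑ k ∈ Finset.Icc 1 (m + 1), pw k‖ := by
            rw [hSdef]; exact norm_smul _ _
        _ = (((m + 1 : ℕ) : ℝ))⁻¹ * ‖∑ k ∈ Finset.Icc 1 (m + 1), pw k‖ := by
            rw [norm_inv, Complex.norm_natCast]
        _ ≤ (((m + 1 : ℕ) : ℝ))⁻¹ * ((m + 1 : ℕ) : ℝ) := by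
            exact mul_le_mul_of_nonneg_left hsum (by positivity)
        _ = 1 := inv_mul_cancel₀ hpos.ne'
  -- mul is zero at zero
  have hmul_zero_l : ∀ k, mul 0 k = 0 := by
    intro k
    have := h_smul_l 0 0 k
    have h0 : ∀ x : StrongDual ℂ E, (0 : ℂ) • x = 0 := fun x => by ext; simp
    rwa [h0, h0] at this
  have hmul_zero_r : ∀ k, mul k 0 = 0 := by
    intro k
    have := h_smul_r 0 0 k
    have h0 : ∀ x : StrongDual ℂ E, (0 : ℂ) • x = 0 := fun x => by ext; simp
    rwa [h0, h0] at this
  -- mul distributes over finite sums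
  have hmul_sum_l : ∀ (s : Finset ℕ) (g : ℕ → StrongDual ℂ E) (k),
      mul (∑ i ∈ s, g i) k = ∑ i ∈ s, mul (g i) k := by
    intro s g k
    induction s using Finset.induction_on with
    | empty => simpa using hmul_zero_l k
    | @insert a s ha ih => rw [Finset.sum_insert ha, Finset.sum_insert ha, h_add_l, ih]
  have hmul_sum_r : ∀ (s : Finset ℕ) (g : ℕ → StrongDual ℂ E) (k),
      mul k (∑ i ∈ s, g i) = ∑ i ∈ s, mul k (g i) := by
    intro s g k
    induction s using Finset.induction_on with
    | empty => simpa using hmul_zero_r k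
    | @insert a s ha ih => rw [Finset.sum_insert ha, Finset.sum_insert ha, h_add_r, ih]
  -- left multiplication by μ on powers
  have hμpw : ∀ n : ℕ, mul μ (pw (n + 1)) = pw (n + 2) := by
    intro n
    induction n with
    | zero =>
      rw [hpw1]
      rw [show pw 2 = mul (pw 1) μ from hpw 1, hpw1]
    | succ m ih =>
      rw [hpw (m + 1), ← h_assoc, ih, ← hpw (m + 2)]
  -- the index-shift identity for sums of powers
  have hshift : ∀ n : ℕ, ∑ k ∈ Finset.Icc 1 n, pw (k + 1)
      = ∑ k ∈ Finset.Icc 1 n, pw k + (pw (n + 1) - pw 1) := by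
    intro n
    induction n with
    | zero => simp
    | succ m ih =>
      rw [Finset.sum_Icc_succ_top (by omega : 1 ≤ m + 1),
        Finset.sum_Icc_succ_top (by omega : 1 ≤ m + 1), ih]
      abel
  -- the key algebraic identities for Cesàro averages
  have hSμ : ∀ n : ℕ, mul (S n) μ = S n + (n : ℂ)⁻¹ • (pw (n + 1) - pw 1) := by
    intro n
    rw [hSdef]
    simp only
    rw [h_smul_l, hmul_sum_l]
    have h1 : ∑ k ∈ Finset.Icc 1 n, mul (pw k) μ = ∑ k ∈ Finset.Icc 1 n, pw (k + 1) :=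
      Finset.sum_congr rfl fun k _ => (hpw k).symm
    rw [h1, hshift n, smul_add]
  have hμS : ∀ n : ℕ, mul μ (S n) = S n + (n : ℂ)⁻¹ • (pw (n + 1) - pw 1) := by
    intro n
    rw [hSdef]
    simp only
    rw [h_smul_r, hmul_sum_r]
    have h1 : ∑ k ∈ Finset.Icc 1 n, mul μ (pw k) = ∑ k ∈ Finset.Icc 1 n, pw (k + 1) := by
      refine Finset.sum_congr rfl fun k hk => ?_
      obtain ⟨hk1, _⟩ := Finset.mem_Icc.mp hk
      obtain ⟨j, rfl⟩ : ∃ j, k = j + 1 := ⟨k - 1, by omega⟩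
      exact hμpw j
    rw [h1, hshift n, smul_add]
  -- extract an ultrafilter along which the Cesàro averages converge to ω
  obtain ⟨U, hU, hUt⟩ := mapClusterPt_iff_ultrafilter.mp hω
  -- the closed unit ball in the weak dual
  set B : Set (WeakDual ℂ E) :=
    WeakDual.toStrongDual ⁻¹' Metric.closedBall 0 1 with hBdef
  have hB_closed : IsClosed B := WeakDual.isClosed_closedBall 0 1
  have hmemB : ∀ n : ℕ, StrongDual.toWeakDual (S n) ∈ B := by
    intro n
    simp only [hBdef, Set.mem_preimage, Metric.mem_closedBall, dist_zero_right]
    exact hS_norm n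
  have hωB : StrongDual.toWeakDual ω ∈ B :=
    hB_closed.mem_of_tendsto hUt (Eventually.of_forall hmemB)
  have hωB' : StrongDual.toWeakDual ω ∈
      {f : WeakDual ℂ E | ‖WeakDual.toStrongDual f‖ ≤ 1} := by
    simpa [hBdef, Metric.mem_closedBall, dist_zero_right] using hωB
  have hBsub : B = {f : WeakDual ℂ E | ‖WeakDual.toStrongDual f‖ ≤ 1} := by
    ext f
    simp [hBdef, Metric.mem_closedBall, dist_zero_right]
  -- the averages tend to ω within the ball
  have hT : Tendsto (fun n => StrongDual.toWeakDual (S n)) U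
      (nhdsWithin (StrongDual.toWeakDual ω) {f : WeakDual ℂ E | ‖WeakDual.toStrongDual f‖ ≤ 1}) := by
    rw [tendsto_nhdsWithin_iff]
    exact ⟨hUt, Eventually.of_forall fun n => hBsub ▸ hmemB n⟩
  -- the error terms tend to zero in norm, hence weak*
  have hε : Tendsto (fun n : ℕ => (n : ℂ)⁻¹ • (pw (n + 1) - pw 1)) atTop
      (nhds (0 : StrongDual ℂ E)) := by
    have hbound : ∀ n : ℕ, ‖(n : ℂ)⁻¹ • (pw (n + 1) - pw 1)‖ ≤ (n : ℝ)⁻¹ * 2 := by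
      intro n
      rw [norm_smul, norm_inv, Complex.norm_natCast]
      refine mul_le_mul_of_nonneg_left ?_ (by positivity)
      calc ‖pw (n + 1) - pw 1‖ ≤ ‖pw (n + 1)‖ + ‖pw 1‖ := norm_sub_le _ _
        _ ≤ 1 + 1 := add_le_add (hpw_norm n) (by rw [hpw1, hμ_norm])
        _ = 2 := by norm_num
    have h1 : Tendsto (fun n : ℕ => ((n : ℝ))⁻¹) atTop (nhds 0) :=
      tendsto_inv_atTop_zero.comp tendsto_natCast_atTop_atTop
    have h2 : Tendsto (fun n : ℕ => (n : ℝ)⁻¹ * 2) atTop (nhds 0) := by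
      simpa using h1.mul_const (2 : ℝ)
    exact squeeze_zero_norm hbound h2
  have hε' : Tendsto (fun n : ℕ => StrongDual.toWeakDual ((n : ℂ)⁻¹ • (pw (n + 1) - pw 1))) U
      (nhds (0 : WeakDual ℂ E)) := by
    have := (Dual.toWeakDual_continuous.tendsto (0 : StrongDual ℂ E)).comp (hε.mono_left hU)
    simpa only [map_zero, Function.comp_def] using this
  -- common limit computation
  have key : ∀ f : ℕ → StrongDual ℂ E, (∀ n, f n = S n + (n : ℂ)⁻¹ • (pw (n + 1) - pw 1)) →
      Tendsto (fun n => StrongDual.toWeakDual (f n)) U (nhds (StrongDual.toWeakDual ω)) := by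
    intro f hf
    have := hUt.add hε'
    simp only [add_zero] at this
    refine this.congr fun n => ?_
    rw [hf n, map_add]
  -- ω ⋆ μ = ω
  have hωμ : mul ω μ = ω := by
    have hlim1 : Tendsto (fun n => StrongDual.toWeakDual (mul (S n) μ)) U
        (nhds (StrongDual.toWeakDual (mul ω μ))) :=
      by
      have h := (h_cont_l μ 1 (StrongDual.toWeakDual ω) hωB').tendsto.comp hT
      exact h
    have hlim2 := key _ hSμ
    have := tendsto_nhds_unique hlim1 hlim2
    exact (StrongDual.toWeakDual_inj _ _).mp this
  -- μ ⋆ ω = ω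
  have hμω : mul μ ω = ω := by
    have hlim1 : Tendsto (fun n => StrongDual.toWeakDual (mul μ (S n))) U
        (nhds (StrongDual.toWeakDual (mul μ ω))) :=
      by
      have h := (h_cont_r μ 1 (StrongDual.toWeakDual ω) hωB').tendsto.comp hT
      exact h
    have hlim2 := key _ hμS
    have := tendsto_nhds_unique hlim1 hlim2
    exact (StrongDual.toWeakDual_inj _ _).mp this
  -- ω absorbs every power
  have hωpw : ∀ n : ℕ, mul ω (pw (n + 1)) = ω := by
    intro n
    induction n with
    | zero => rw [hpw1]; exact hωμ
    | succ m ih => rw [hpw (m + 1), ← h_assoc, ih, hωμ]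
  -- ω ⋆ Sₙ = ω for n ≥ 1
  have hωS : ∀ n : ℕ, 1 ≤ n → mul ω (S n) = ω := by
    intro n hn
    rw [hSdef]
    simp only
    rw [h_smul_r, hmul_sum_r]
    have h2 : ∀ k ∈ Finset.Icc 1 n, mul ω (pw k) = ω := by
      intro k hk
      obtain ⟨hk1, _⟩ := Finset.mem_Icc.mp hk
      obtain ⟨j, rfl⟩ : ∃ j, k = j + 1 := ⟨k - 1, by omega⟩
      exact hωpw j
    have h1 : ∑ k ∈ Finset.Icc 1 n, mul ω (pw k) = (n : ℕ) • ω := by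
      rw [Finset.sum_congr rfl h2, Finset.sum_const, Nat.card_Icc,
        show n + 1 - 1 = n by omega]
    rw [h1, ← Nat.cast_smul_eq_nsmul ℂ, smul_smul,
      inv_mul_cancel₀ (Nat.cast_ne_zero.mpr (by omega)), one_smul]
  -- ω ⋆ ω = ω
  have hωω : mul ω ω = ω := by
    have hlim1 : Tendsto (fun n => StrongDual.toWeakDual (mul ω (S n))) U
        (nhds (StrongDual.toWeakDual (mul ω ω))) :=
      by
      have h := (h_cont_r ω 1 (StrongDual.toWeakDual ω) hωB').tendsto.comp hT
      exact h
    have hlim2 : Tendsto (fun n => StrongDual.toWeakDual (mul ω (S n))) U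
        (nhds (StrongDual.toWeakDual ω)) := by
      have hev : ∀ᶠ n in (U : Filter ℕ),
          (fun _ : ℕ => StrongDual.toWeakDual ω) n = StrongDual.toWeakDual (mul ω (S n)) := by
        filter_upwards [hU (eventually_ge_atTop 1)] with n hn
        rw [hωS n hn]
      exact tendsto_const_nhds.congr' hev
    have := tendsto_nhds_unique hlim1 hlim2
    exact (StrongDual.toWeakDual_inj _ _).mp this
  exact ⟨hμω, hωμ, hωω⟩
end

section
/- Let S be a compact (in the weak* topology) semitopological semigroup structure on the state space of a unital C*-algebra, with separately weak*-continuous multiplication ⋆, and let μ be a state. Then the sequence of Cesàro averages ωₙ = (1/n)(μ + μ² + ⋯ + μⁿ) has every weak* cluster point φ satisfying μ ⋆ φ = φ ⋆ μ = φ ⋆ φ = φ. In particular if the cluster point is unique (e.g. equal to 0 in a non-unital setting, or to a unique invariant state), the Cesàro averages weak*-converge. -/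
/-!
Writing `ωₙ` for the Cesàro averages, `μ ⋆ ωₙ - ωₙ = ωₙ ⋆ μ - ωₙ = (μⁿ⁺¹ - μ) / n` tends to `0` in
norm, hence weak*. Since all `ωₙ` lie in the weak*-closed state space, on which `⋆` is separately
continuous, every cluster point `φ` satisfies `μ ⋆ φ = φ = φ ⋆ μ`. Then `μᵏ ⋆ φ = φ` for all `k`,
so `ωₙ ⋆ φ = φ`, and passing to the limit gives `φ ⋆ φ = φ`. Finally, the state space is
weak*-compact, so a sequence in it with a single cluster point converges to it.
-/

open scoped ComplexOrder
open Filter NormedSpace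

/-- The state space of a unital C*-algebra `E`, as a subset of the dual. -/
def IsStateFn {E : Type*} [CStarAlgebra E] [PartialOrder E] [StarOrderedRing E]
    (f : StrongDual ℂ E) : Prop :=
  ‖f‖ = 1 ∧ f 1 = 1 ∧ ∀ x : E, 0 ≤ x → 0 ≤ f x

open Finset Topology

section Cesaro

variable (𝕜 : Type*) {M N : Type*} [DivisionRing 𝕜] [AddCommGroup M] [Module 𝕜 M]
  [AddCommGroup N] [Module 𝕜 N]

def cesaro (p : ℕ → M) (n : ℕ) : M := (n : 𝕜)⁻¹ • ∑ k ∈ Icc 1 n, p k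

variable {𝕜}

theorem map_cesaro (L : M →ₗ[𝕜] N) (p : ℕ → M) (n : ℕ) :
    L (cesaro 𝕜 p n) = cesaro 𝕜 (fun k ↦ L (p k)) n := by
  simp only [cesaro, map_smul, map_sum]

theorem cesaro_congr {p q : ℕ → M} (h : ∀ k, 1 ≤ k → p k = q k) (n : ℕ) :
    cesaro 𝕜 p n = cesaro 𝕜 q n := by
  rw [cesaro, cesaro, sum_congr rfl fun k hk ↦ h k (mem_Icc.1 hk).1]

theorem cesaro_const [CharZero 𝕜] (c : M) {n : ℕ} (hn : n ≠ 0) :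
    cesaro 𝕜 (fun _ ↦ c) n = c := by
  rw [cesaro, sum_const, Nat.card_Icc, Nat.add_sub_cancel, ← Nat.cast_smul_eq_nsmul 𝕜, smul_smul,
    inv_mul_cancel₀ (Nat.cast_ne_zero.2 hn), one_smul]

theorem cesaro_shift_sub_cesaro (p : ℕ → M) (n : ℕ) :
    cesaro 𝕜 (fun k ↦ p (k + 1)) n - cesaro 𝕜 p n = (n : 𝕜)⁻¹ • (p (n + 1) - p 1) := by
  rcases Nat.eq_zero_or_pos n with rfl | hn
  · simp [cesaro]
  · rw [cesaro, cesaro, ← smul_sub, ← sum_sub_distrib, sum_Icc_sub hn]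

theorem map_cesaro_sub_cesaro {L : M →ₗ[𝕜] M} {p : ℕ → M} (hL : ∀ k, 1 ≤ k → L (p k) = p (k + 1))
    (n : ℕ) : L (cesaro 𝕜 p n) - cesaro 𝕜 p n = (n : 𝕜)⁻¹ • (p (n + 1) - p 1) := by
  rw [map_cesaro, cesaro_congr hL, cesaro_shift_sub_cesaro]

end Cesaro

section NormedCesaro

variable {𝕜 E : Type*} [RCLike 𝕜] [SeminormedAddCommGroup E] [NormedSpace 𝕜 E]

theorem norm_cesaro_le {p : ℕ → E} {C : ℝ} (hp : ∀ k, 1 ≤ k → ‖p k‖ ≤ C) {n : ℕ} (hn : n ≠ 0) :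
    ‖cesaro 𝕜 p n‖ ≤ C := by
  have hn' : (0 : ℝ) < n := by positivity
  calc ‖cesaro 𝕜 p n‖ ≤ (n : ℝ)⁻¹ * ∑ k ∈ Icc 1 n, ‖p k‖ := by
        rw [cesaro, norm_smul, norm_inv, RCLike.norm_natCast]
        gcongr
        exact norm_sum_le _ _
    _ ≤ (n : ℝ)⁻¹ * (n * C) := by
        gcongr
        simpa using sum_le_card_nsmul _ _ C fun k hk ↦ hp k (mem_Icc.1 hk).1
    _ = C := by field_simp

theorem tendsto_map_cesaro_sub_cesaro {L : E →ₗ[𝕜] E} {p : ℕ → E}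
    (hL : ∀ k, 1 ≤ k → L (p k) = p (k + 1)) {C : ℝ} (hp : ∀ k, 1 ≤ k → ‖p k‖ ≤ C) :
    Tendsto (fun n ↦ L (cesaro 𝕜 p n) - cesaro 𝕜 p n) atTop (𝓝 0) := by
  simp only [map_cesaro_sub_cesaro hL]
  refine tendsto_inv_atTop_nhds_zero_nat.zero_smul_isBoundedUnder_le ⟨C + C, ?_⟩
  refine eventually_map.2 (Eventually.of_forall fun n ↦ ?_)
  exact (norm_sub_le _ _).trans (add_le_add (hp _ (by omega)) (hp 1 le_rfl))

end NormedCesaro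

theorem eq_of_mapClusterPt_of_tendsto_sub {X ι : Type*} [TopologicalSpace X] [AddGroup X]
    [IsTopologicalAddGroup X] [T2Space X] {l : Filter ι} {u : ι → X} {S : Set X} {x : X}
    {F G : X → X} (hS : IsClosed S) (hx : MapClusterPt x l u) (hu : ∀ᶠ i in l, u i ∈ S)
    (hF : ContinuousOn F S) (hG : ContinuousOn G S)
    (hFG : Tendsto (fun i ↦ F (u i) - G (u i)) l (𝓝 0)) : F x = G x := by
  obtain ⟨U, hUl, hUx⟩ := mapClusterPt_iff_ultrafilter.1 hx
  have hxS : x ∈ S := hS.mem_of_mapClusterPt hx hu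
  have huS : Tendsto u U (𝓝[S] x) := tendsto_nhdsWithin_iff.2 ⟨hUx, hUl hu⟩
  have hlim := ((hF x hxS).tendsto.comp huS).sub ((hG x hxS).tendsto.comp huS)
  exact sub_eq_zero.1 (tendsto_nhds_unique hlim (hFG.mono_left hUl))

section Powers

variable {X : Type*} {mul : X → X → X} {μ : X} {pw : ℕ → X}

theorem pow_mem_of_mul_mem {P : X → Prop} (hP : ∀ f g, P f → P g → P (mul f g)) (hμ : P μ)
    (hpw1 : pw 1 = μ) (hpw : ∀ n, pw (n + 1) = mul (pw n) μ) : ∀ k, 1 ≤ k → P (pw k) :=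
  Nat.le_induction (hpw1 ▸ hμ) fun n _ ih ↦ hpw n ▸ hP _ _ ih hμ

theorem mul_pow_eq_pow_succ (h_assoc : ∀ f g k, mul (mul f g) k = mul f (mul g k))
    (hpw1 : pw 1 = μ) (hpw : ∀ n, pw (n + 1) = mul (pw n) μ) :
    ∀ k, 1 ≤ k → mul μ (pw k) = pw (k + 1) :=
  Nat.le_induction (by rw [hpw 1, hpw1]) fun n _ ih ↦ by rw [hpw n, ← h_assoc, ih, ← hpw]

theorem pow_mul_eq_of_mul_eq (h_assoc : ∀ f g k, mul (mul f g) k = mul f (mul g k))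
    (hpw1 : pw 1 = μ) (hpw : ∀ n, pw (n + 1) = mul (pw n) μ) {φ : X} (hφ : mul μ φ = φ) :
    ∀ k, 1 ≤ k → mul (pw k) φ = φ :=
  Nat.le_induction (by rw [hpw1, hφ]) fun n _ ih ↦ by rw [hpw n, h_assoc, hφ, ih]

end Powers

section States

variable {E : Type*} [CStarAlgebra E] [PartialOrder E] [StarOrderedRing E]

theorem isStateFn_iff {f : StrongDual ℂ E} :
    IsStateFn f ↔ ‖f‖ ≤ 1 ∧ f 1 = 1 ∧ ∀ x : E, 0 ≤ x → 0 ≤ f x := by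
  refine ⟨fun h ↦ ⟨h.1.le, h.2⟩, fun ⟨h_norm, h_one, h_pos⟩ ↦ ⟨le_antisymm h_norm ?_, h_one, h_pos⟩⟩
  rcases subsingleton_or_nontrivial E with hE | hE
  · simp [Subsingleton.elim (1 : E) 0] at h_one
  simpa [h_one, CStarRing.norm_one] using f.le_opNorm 1

variable (E) in
def stateSpace : Set (WeakDual ℂ E) := {f | IsStateFn (WeakDual.toStrongDual f)}

theorem isClosed_stateSpace : IsClosed (stateSpace E) := by
  have h : stateSpace E = WeakDual.toStrongDual ⁻¹' Metric.closedBall 0 1 ∩ {f | f 1 = 1} ∩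
      ⋂ (x : E) (_ : 0 ≤ x), {f | 0 ≤ f x} := by
    ext f
    simp [stateSpace, isStateFn_iff, and_assoc]
  rw [h]
  refine ((WeakDual.isClosed_closedBall 0 1).inter ?_).inter ?_
  · exact isClosed_eq (WeakDual.eval_continuous 1) continuous_const
  · exact isClosed_iInter fun x ↦ isClosed_iInter fun _ ↦
      isClosed_le continuous_const (WeakDual.eval_continuous x)

theorem isCompact_stateSpace : IsCompact (stateSpace E) :=
  (WeakDual.isCompact_closedBall 0 1).of_isClosed_subset isClosed_stateSpace
    fun f hf ↦ by simpa using (isStateFn_iff.1 hf).1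

theorem isStateFn_cesaro {p : ℕ → StrongDual ℂ E} (hp : ∀ k, 1 ≤ k → IsStateFn (p k)) {n : ℕ}
    (hn : n ≠ 0) : IsStateFn (cesaro ℂ p n) := by
  have h_apply (x : E) : cesaro ℂ p n x = cesaro ℂ (fun k ↦ p k x) n :=
    map_cesaro (ContinuousLinearMap.apply ℂ ℂ x : StrongDual ℂ E →ₗ[ℂ] ℂ) p n
  refine isStateFn_iff.2 ⟨norm_cesaro_le (fun k hk ↦ (hp k hk).1.le) hn, ?_, fun x hx ↦ ?_⟩
  · rw [h_apply, cesaro_congr fun k hk ↦ (hp k hk).2.1, cesaro_const _ hn]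
  · rw [h_apply, cesaro, smul_eq_mul]
    exact mul_nonneg (by positivity) (sum_nonneg fun k hk ↦ (hp k (mem_Icc.1 hk).1).2.2 x hx)

theorem eventually_cesaro_mem_stateSpace {p : ℕ → StrongDual ℂ E}
    (hp : ∀ k, 1 ≤ k → IsStateFn (p k)) :
    ∀ᶠ n in atTop, StrongDual.toWeakDual (cesaro ℂ p n) ∈ stateSpace E :=
  eventually_ne_atTop 0 |>.mono fun _ hn ↦ isStateFn_cesaro hp hn

variable {p : ℕ → StrongDual ℂ E} {L : StrongDual ℂ E →ₗ[ℂ] StrongDual ℂ E} {φ : StrongDual ℂ E}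

theorem map_eq_self_of_mapClusterPt_cesaro (hp : ∀ k, 1 ≤ k → IsStateFn (p k))
    (hL_cont : ContinuousOn
      (fun f : WeakDual ℂ E ↦ StrongDual.toWeakDual (L (WeakDual.toStrongDual f)))
      (stateSpace E))
    (hL : ∀ k, 1 ≤ k → L (p k) = p (k + 1))
    (hφ : MapClusterPt (StrongDual.toWeakDual φ) atTop
      (fun n ↦ StrongDual.toWeakDual (cesaro ℂ p n))) :
    L φ = φ := by
  refine StrongDual.toWeakDual.injective <| eq_of_mapClusterPt_of_tendsto_sub
    (F := fun f ↦ StrongDual.toWeakDual (L (WeakDual.toStrongDual f))) (G := id)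
    isClosed_stateSpace hφ (eventually_cesaro_mem_stateSpace hp) hL_cont continuousOn_id ?_
  have h := (Dual.toWeakDual_continuous.tendsto 0).comp
    (tendsto_map_cesaro_sub_cesaro hL fun k hk ↦ (hp k hk).1.le)
  simpa [Function.comp_def] using h

theorem map_eq_of_mapClusterPt_cesaro (hp : ∀ k, 1 ≤ k → IsStateFn (p k))
    (hL_cont : ContinuousOn
      (fun f : WeakDual ℂ E ↦ StrongDual.toWeakDual (L (WeakDual.toStrongDual f)))
      (stateSpace E))
    {c : StrongDual ℂ E} (hL : ∀ k, 1 ≤ k → L (p k) = c)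
    (hφ : MapClusterPt (StrongDual.toWeakDual φ) atTop
      (fun n ↦ StrongDual.toWeakDual (cesaro ℂ p n))) :
    L φ = c := by
  refine StrongDual.toWeakDual.injective <| eq_of_mapClusterPt_of_tendsto_sub
    (F := fun f ↦ StrongDual.toWeakDual (L (WeakDual.toStrongDual f))) isClosed_stateSpace
    hφ (eventually_cesaro_mem_stateSpace hp) hL_cont continuousOn_const ?_
  refine tendsto_const_nhds.congr' (eventually_ne_atTop 0 |>.mono fun n hn ↦ ?_)
  simp [map_cesaro, cesaro_congr hL, cesaro_const c hn]

end States

theorem cesaro_cluster_points_in_state_semigroup_general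
    {E : Type*} [CStarAlgebra E] [PartialOrder E] [StarOrderedRing E]
    (mul : StrongDual ℂ E → StrongDual ℂ E → StrongDual ℂ E)
    -- states form a semigroup under ⋆
    (h_states : ∀ f g, IsStateFn f → IsStateFn g → IsStateFn (mul f g))
    -- bilinearity (⋆ is a contractive bilinear multiplication)
    (h_add_l : ∀ f g k, mul (f + g) k = mul f k + mul g k)
    (h_add_r : ∀ f g k, mul k (f + g) = mul k f + mul k g)
    (h_smul_l : ∀ (c : ℂ) f k, mul (c • f) k = c • mul f k)
    (h_smul_r : ∀ (c : ℂ) f k, mul k (c • f) = c • mul k f)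
    -- associativity
    (h_assoc : ∀ f g k, mul (mul f g) k = mul f (mul g k))
    -- separate weak*-continuity on the (weak*-compact) state space
    (h_cont_l : ∀ ν : StrongDual ℂ E, ContinuousOn
      (fun f : WeakDual ℂ E => StrongDual.toWeakDual (mul (WeakDual.toStrongDual f) ν))
      {f : WeakDual ℂ E | IsStateFn (WeakDual.toStrongDual f)})
    (h_cont_r : ∀ ν : StrongDual ℂ E, ContinuousOn
      (fun f : WeakDual ℂ E => StrongDual.toWeakDual (mul ν (WeakDual.toStrongDual f)))
      {f : WeakDual ℂ E | IsStateFn (WeakDual.toStrongDual f)})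
    -- μ is a state, with convolution powers μᵏ
    (μ : StrongDual ℂ E) (hμ : IsStateFn μ)
    (pw : ℕ → StrongDual ℂ E) (hpw1 : pw 1 = μ) (hpw : ∀ n, pw (n + 1) = mul (pw n) μ) :
    (∀ φ : StrongDual ℂ E,
      MapClusterPt (StrongDual.toWeakDual φ) atTop
        (fun n : ℕ => StrongDual.toWeakDual ((n : ℂ)⁻¹ • ∑ k ∈ Finset.Icc 1 n, pw k)) →
      mul μ φ = φ ∧ mul φ μ = φ ∧ mul φ φ = φ) ∧
    (∀ φ₀ : StrongDual ℂ E,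
      (∀ φ : StrongDual ℂ E,
        MapClusterPt (StrongDual.toWeakDual φ) atTop
          (fun n : ℕ => StrongDual.toWeakDual ((n : ℂ)⁻¹ • ∑ k ∈ Finset.Icc 1 n, pw k)) → φ = φ₀) →
      Tendsto (fun n : ℕ => StrongDual.toWeakDual ((n : ℂ)⁻¹ • ∑ k ∈ Finset.Icc 1 n, pw k))
        atTop (nhds (StrongDual.toWeakDual φ₀))) := by
  let B := LinearMap.mk₂ ℂ mul h_add_l h_smul_l (fun k f g ↦ h_add_r f g k)
    (fun c k f ↦ h_smul_r c f k)
  have hpw_state : ∀ k, 1 ≤ k → IsStateFn (pw k) := pow_mem_of_mul_mem h_states hμ hpw1 hpw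
  refine ⟨fun φ hφ ↦ ?_, fun φ₀ hφ₀ ↦ ?_⟩
  · have hμφ : mul μ φ = φ := map_eq_self_of_mapClusterPt_cesaro (L := B μ) hpw_state
      (h_cont_r μ) (mul_pow_eq_pow_succ h_assoc hpw1 hpw) hφ
    refine ⟨hμφ, ?_, ?_⟩
    · exact map_eq_self_of_mapClusterPt_cesaro (L := B.flip μ) hpw_state (h_cont_l μ)
        (fun k _ ↦ (hpw k).symm) hφ
    · exact map_eq_of_mapClusterPt_cesaro (L := B.flip φ) hpw_state (h_cont_l φ)
        (pow_mul_eq_of_mul_eq h_assoc hpw1 hpw hμφ) hφ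
  · exact isCompact_stateSpace.tendsto_nhds_of_unique_mapClusterPt
      (eventually_cesaro_mem_stateSpace hpw_state) fun x _ hx ↦ by
        rw [← hφ₀ (WeakDual.toStrongDual x) hx, WeakDual.toWeakDual_toStrongDual]

/-- Let the state space of a unital C*-algebra carry a compact (weak*) semitopological
semigroup structure `⋆` (associative, separately weak*-continuous, states multiply to
states), and let `μ` be a state.  Then every weak* cluster point `φ` of the Cesàro averages
`ωₙ = (1/n)(μ + μ² + ⋯ + μⁿ)` satisfies `μ ⋆ φ = φ ⋆ μ = φ ⋆ φ = φ`.  In particular, if the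
cluster point is unique, the Cesàro averages weak*-converge to it. -/
theorem cesaro_cluster_points_in_state_semigroup
    {E : Type*} [CStarAlgebra E] [PartialOrder E] [StarOrderedRing E]
    (mul : StrongDual ℂ E → StrongDual ℂ E → StrongDual ℂ E)
    -- states form a semigroup under ⋆
    (h_states : ∀ f g, IsStateFn f → IsStateFn g → IsStateFn (mul f g))
    -- bilinearity (⋆ is a contractive bilinear multiplication)
    (h_add_l : ∀ f g k, mul (f + g) k = mul f k + mul g k)
    (h_add_r : ∀ f g k, mul k (f + g) = mul k f + mul k g)
    (h_smul_l : ∀ (c : ℂ) f k, mul (c • f) k = c • mul f k)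
    (h_smul_r : ∀ (c : ℂ) f k, mul k (c • f) = c • mul k f)
    (h_contr : ∀ f g, ‖mul f g‖ ≤ ‖f‖ * ‖g‖)
    -- associativity
    (h_assoc : ∀ f g k, mul (mul f g) k = mul f (mul g k))
    -- separate weak*-continuity on the (weak*-compact) state space
    (h_cont_l : ∀ ν : StrongDual ℂ E, ContinuousOn
      (fun f : WeakDual ℂ E => StrongDual.toWeakDual (mul (WeakDual.toStrongDual f) ν))
      {f : WeakDual ℂ E | IsStateFn (WeakDual.toStrongDual f)})
    (h_cont_r : ∀ ν : StrongDual ℂ E, ContinuousOn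
      (fun f : WeakDual ℂ E => StrongDual.toWeakDual (mul ν (WeakDual.toStrongDual f)))
      {f : WeakDual ℂ E | IsStateFn (WeakDual.toStrongDual f)})
    -- μ is a state, with convolution powers μᵏ
    (μ : StrongDual ℂ E) (hμ : IsStateFn μ)
    (pw : ℕ → StrongDual ℂ E) (hpw1 : pw 1 = μ) (hpw : ∀ n, pw (n + 1) = mul (pw n) μ) :
    (∀ φ : StrongDual ℂ E,
      MapClusterPt (StrongDual.toWeakDual φ) atTop
        (fun n : ℕ => StrongDual.toWeakDual ((n : ℂ)⁻¹ • ∑ k ∈ Finset.Icc 1 n, pw k)) →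
      mul μ φ = φ ∧ mul φ μ = φ ∧ mul φ φ = φ) ∧
    (∀ φ₀ : StrongDual ℂ E,
      (∀ φ : StrongDual ℂ E,
        MapClusterPt (StrongDual.toWeakDual φ) atTop
          (fun n : ℕ => StrongDual.toWeakDual ((n : ℂ)⁻¹ • ∑ k ∈ Finset.Icc 1 n, pw k)) → φ = φ₀) →
      Tendsto (fun n : ℕ => StrongDual.toWeakDual ((n : ℂ)⁻¹ • ∑ k ∈ Finset.Icc 1 n, pw k))
        atTop (nhds (StrongDual.toWeakDual φ₀))) :=
  cesaro_cluster_points_in_state_semigroup_general mul h_states h_add_l h_add_r h_smul_l h_smul_r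
    h_assoc h_cont_l h_cont_r μ hμ pw hpw1 hpw
end

section
/- Let G be a locally compact group, μ a probability measure on G, and suppose there exists a sequence (or net) such that ‖f ∗ μⁿ − f(1)μⁿ‖ → 0 in L¹-type norm for all f in a dense subset D of the normal states, where f(1) denotes the total mass of f. Then every bounded μ-harmonic element x (i.e., fixed point of the dual Markov operator) is a scalar: for all f, g normal states, ⟨f, x⟩ = ⟨g, x⟩. -/
open Filter NormedSpace

/-! A harmonic `x` is invariant under right convolution by every power `μⁿ`, so for `f ∈ D`
the values `x (f ∗ μⁿ - f(1) μⁿ) = x f - f(1) x μ` are constant in `n`; since they tend to `0`,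
`x f = x μ`. Continuity of `x` and density of `D` extend this to all states. -/

section Harmonic

variable {A B : Type*} [Semigroup A] {x : A → B} {μ : A} {pw : ℕ → A}

theorem apply_mul_pow_eq_of_harmonic (hpw1 : pw 1 = μ) (hpw : ∀ n, pw (n + 1) = pw n * μ)
    (hx : ∀ f, x (f * μ) = x f) {n : ℕ} (hn : 1 ≤ n) (f : A) : x (f * pw n) = x f := by
  induction n, hn using Nat.le_induction generalizing f with
  | base => rw [hpw1, hx]
  | succ n _ ih => rw [hpw, ← mul_assoc, hx, ih]

theorem apply_pow_eq_of_harmonic (hpw1 : pw 1 = μ) (hpw : ∀ n, pw (n + 1) = pw n * μ)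
    (hx : ∀ f, x (f * μ) = x f) {n : ℕ} (hn : 1 ≤ n) : x (pw n) = x μ := by
  induction n, hn using Nat.le_induction with
  | base => rw [hpw1]
  | succ n _ ih => rw [hpw, hx, ih]

end Harmonic

theorem ContinuousLinearMap.eq_smul_of_tendsto_norm_sub_smul {𝕜 E F ι : Type*}
    [NormedField 𝕜] [SeminormedAddCommGroup E] [NormedSpace 𝕜 E]
    [NormedAddCommGroup F] [NormedSpace 𝕜 F] {l : Filter ι} [l.NeBot]
    (L : E →L[𝕜] F) {u v : ι → E} {c : 𝕜} {a b : F}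
    (h : Tendsto (fun i => ‖u i - c • v i‖) l (nhds 0))
    (hu : ∀ᶠ i in l, L (u i) = a) (hv : ∀ᶠ i in l, L (v i) = b) : a = c • b := by
  have hL : Tendsto (fun i => L (u i - c • v i)) l (nhds 0) :=
    (L.continuous.tendsto' 0 0 (map_zero L)).comp (tendsto_zero_iff_norm_tendsto_zero.mpr h)
  have hconst : (fun i => L (u i - c • v i)) =ᶠ[l] fun _ => a - c • b := by
    filter_upwards [hu, hv] with i hui hvi
    rw [map_sub, map_smul, hui, hvi]
  exact sub_eq_zero.mp (tendsto_nhds_unique tendsto_const_nhds (hL.congr' hconst))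

theorem harmonic_trivial_of_asymptotic_invariance_general
    {A : Type*} [NonUnitalNormedRing A] [NormedSpace ℂ A]
    [IsScalarTower ℂ A A] [SMulCommClass ℂ A A]
    (one : StrongDual ℂ A)                     -- the unit 1 ∈ M = A*, ⟨f, 1⟩ = f(1)
    (S : Set A)                          -- the normal states
    (hS : ∀ f ∈ S, ‖f‖ = 1 ∧ one f = 1)
    (D : Set A) (hD_sub : D ⊆ S) (hD_dense : S ⊆ closure D)  -- D dense in the states
    (μ : A)
    (pw : ℕ → A) (hpw1 : pw 1 = μ)
    (hpw : ∀ n, pw (n + 1) = pw n * μ)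
    (hinv : ∀ f ∈ D, Tendsto (fun n : ℕ => ‖f * pw n - one f • pw n‖) atTop (nhds 0))
    (x : StrongDual ℂ A)
    (hx_harmonic : ∀ f : A, x (f * μ) = x f) :
    ∀ f ∈ S, ∀ g ∈ S, x f = x g := by
  have hxD : Set.EqOn x (fun _ => x μ) D := fun f hf => by
    have h := x.eq_smul_of_tendsto_norm_sub_smul (hinv f hf)
      (eventually_atTop.2 ⟨1, fun n hn => apply_mul_pow_eq_of_harmonic hpw1 hpw hx_harmonic hn f⟩)
      (eventually_atTop.2 ⟨1, fun n hn => apply_pow_eq_of_harmonic hpw1 hpw hx_harmonic hn⟩)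
    rwa [(hS f (hD_sub hf)).2, one_smul] at h
  have hxS := hxD.closure x.continuous continuous_const
  intro f hf g hg
  rw [hxS (hD_dense hf), hxS (hD_dense hg)]

/-- Abstract Kaimanovich–Vershik argument: let `A` be a Banach (convolution) algebra of
normal functionals, `S ⊆ A` the set of normal states (norm one, total mass `one f = 1`,
where `one ∈ A*` is the unit of the dual), `D ⊆ S` a dense subset of the states, and
`μ ∈ S` a state whose convolution powers `μⁿ ∈ S` satisfy
`‖f ∗ μⁿ − f(1)·μⁿ‖ → 0` for every `f ∈ D`.  Then every bounded `μ`-harmonic element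
`x ∈ A*` (i.e. `x(f ∗ μ) = x(f)` for all `f`) is a scalar: `⟨f, x⟩ = ⟨g, x⟩` for all
normal states `f, g ∈ S`. -/
theorem harmonic_trivial_of_asymptotic_invariance
    {A : Type*} [NonUnitalNormedRing A] [NormedSpace ℂ A]
    [IsScalarTower ℂ A A] [SMulCommClass ℂ A A]
    (one : StrongDual ℂ A)                     -- the unit 1 ∈ M = A*, ⟨f, 1⟩ = f(1)
    (S : Set A)                          -- the normal states
    (hS : ∀ f ∈ S, ‖f‖ = 1 ∧ one f = 1)
    (D : Set A) (hD_sub : D ⊆ S) (hD_dense : S ⊆ closure D)  -- D dense in the states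
    (μ : A) (hμ : μ ∈ S)
    (pw : ℕ → A) (hpw1 : pw 1 = μ) (hpwS : ∀ n, 1 ≤ n → pw n ∈ S)
    (hpw : ∀ n, pw (n + 1) = pw n * μ)
    (hinv : ∀ f ∈ D, Tendsto (fun n : ℕ => ‖f * pw n - one f • pw n‖) atTop (nhds 0))
    (x : StrongDual ℂ A)
    (hx_harmonic : ∀ f : A, x (f * μ) = x f) :
    ∀ f ∈ S, ∀ g ∈ S, x f = x g :=
  harmonic_trivial_of_asymptotic_invariance_general one S hS D hD_sub hD_dense μ pw hpw1 hpw hinv x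
    hx_harmonic
end
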